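/- arXiv:1412.0538 — 2 statements merged into one kernel-verified Lean document; each statement's English description precedes it below -/
import Mathlib

section
/- Let T be a finite weighted tree rooted at the start vertex v_s, with nonnegative edge and vertex weights. Then there exists an agent-minimal closed covering walk from v_s that visits the collected subtrees of T in decreasing order of the weights of their dominating edges, and that, upon first entering each collected subtree, fully explores it (visiting all of its vertices, e.g., by depth-first search) before leaving it and never re-enters it afterwards. -/
/-! Strategic deployment: common definitions.

A walk is scanned with a state consisting of the set of already-visited
vertices, the number `curr` of currently available (non-settled) agents, and
the number `add` of additional agents (beyond `N = ∑ v, wV v`) recruited so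
far.  Crossing an edge `e` requires `curr ≥ wE e` (topping up `add`
otherwise); the first visit of a vertex `v` settles `wV v` agents there. -/

namespace Deploy

structure St (V : Type*) (α : Type*) where
  visited : Finset V
  curr : α
  add : α

variable {V : Type*} [DecidableEq V] {α : Type*} [AddCommMonoid α] [LinearOrder α] [IsOrderedAddMonoid α] [Sub α]

/-- Scan step for crossing an edge `e`. -/
def crossEdge (wE : Sym2 V → α) (e : Sym2 V) (s : St V α) : St V α :=
  if s.curr < wE e then ⟨s.visited, wE e, s.add + (wE e - s.curr)⟩ else s

/-- Scan step for visiting a vertex `v` (only first visits have an effect). -/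
def visitVtx (wV : V → α) (v : V) (s : St V α) : St V α :=
  if v ∈ s.visited then s
  else if s.curr < wV v then ⟨insert v s.visited, 0, s.add + (wV v - s.curr)⟩
  else ⟨insert v s.visited, s.curr - wV v, s.add⟩

variable {G : SimpleGraph V}

/-- Scanning a walk: alternately cross the next edge and visit the next vertex. -/
def scanWalk (wE : Sym2 V → α) (wV : V → α) : {u t : V} → G.Walk u t → St V α → St V α
  | _, _, .nil, s => s
  | u, _, .cons (v := v) _ p, s => scanWalk wE wV p (visitVtx wV v (crossEdge wE s(u, v) s))

/-- The agent count of a walk `p` starting at `vs`: the scan starts with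
`curr = N = ∑ v, wV v` and `add = 0`, first visiting the start vertex; the
agent count is `N` plus the final value of `add`. -/
def agentCount [Fintype V] (wE : Sym2 V → α) (wV : V → α) {vs t : V} (p : G.Walk vs t) : α :=
  (∑ v, wV v) + (scanWalk wE wV p (visitVtx wV vs ⟨∅, ∑ v, wV v, 0⟩)).add

/-- A walk is covering if every vertex of the graph appears on it. -/
def IsCovering {vs t : V} (p : G.Walk vs t) : Prop := ∀ v : V, v ∈ p.support

end Deploy

namespace Deploy

variable {V : Type*} [DecidableEq V] {T : SimpleGraph V}

/-- A leaf of a rooted tree: a vertex of degree 1 different from the root. -/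
def IsLeaf (T : SimpleGraph V) (vs b : V) : Prop :=
  Nat.card (T.neighborSet b) = 1 ∧ b ≠ vs

/-- The unique path between two vertices of a tree, as a walk. -/
noncomputable def treePath (hT : T.IsTree) (u v : V) : T.Walk u v :=
  (hT.existsUnique_path u v).choose

/-- The dominating edge `e(b)` of a vertex `b`: an edge of maximum weight on
the unique path from the root `vs` to `b`, chosen among ties as the one
closest to the root (`List.argmax` returns the first maximising element). -/
noncomputable def domEdge (hT : T.IsTree) (wE : Sym2 V → NNReal) (vs b : V) : Sym2 V :=
  ((treePath hT vs b).edges.argmax wE).getD s(vs, vs)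

/-- The position of the dominating edge of `b` on the path from `vs` to `b`. -/
noncomputable def domIdx (hT : T.IsTree) (wE : Sym2 V → NNReal) (vs b : V) : ℕ :=
  (treePath hT vs b).edges.idxOf (domEdge hT wE vs b)

/-- The vertices of the path `T(b)` from `v(b)` to `b`, where `v(b)` is the
endpoint of the dominating edge `e(b)` that is farther from the root: the
suffix of the path from `vs` to `b` strictly beyond the dominating edge. -/
noncomputable def tailVerts (hT : T.IsTree) (wE : Sym2 V → NNReal) (vs b : V) : List V :=
  (treePath hT vs b).support.drop (domIdx hT wE vs b + 1)

/-- The set of dominating edges of leaves of the rooted tree. -/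
def DomEdges (hT : T.IsTree) (wE : Sym2 V → NNReal) (vs : V) : Set (Sym2 V) :=
  {e | ∃ b, IsLeaf T vs b ∧ domEdge hT wE vs b = e}

/-- The vertex set of the collected subtree dominated by the edge `e`: the
union of the paths `T(b)` over all leaves `b` whose dominating edge is `e`. -/
def csVerts (hT : T.IsTree) (wE : Sym2 V → NNReal) (vs : V) (e : Sym2 V) : Set V :=
  {v | ∃ b, IsLeaf T vs b ∧ domEdge hT wE vs b = e ∧ v ∈ tailVerts hT wE vs b}

/-- The root `v(b)` of the collected subtree dominated by `e`: the endpoint of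
`e` farther from the root, i.e. the first vertex on the common tail of the
paths of the leaves of the group. -/
noncomputable def csRoot (hT : T.IsTree) (wE : Sym2 V → NNReal) (vs : V) (e : Sym2 V) : V :=
  open scoped Classical in
  if h : ∃ b, IsLeaf T vs b ∧ domEdge hT wE vs b = e then
    (tailVerts hT wE vs h.choose).headD vs
  else vs

end Deploy

/-!
Let `pathMax v` be the largest edge weight on the root path to `v`. For `v ≠ vs` it is the weight
of the dominating edge of `v`, and on the collected subtree dominated by `e` it equals `wE e`.

Along a scan, `curr + (weight settled) - add` is invariant, so a covering closed walk has agent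
count `N + curr_end`.

Lower bound. Let `x ∈ A` with `pathMax x ≤ pathMax y` for all `y ∈ A`. When the walk crosses a
dominating edge of a vertex of `A` for the last time, it carries at least `pathMax x` agents and
has already visited every vertex on the root paths to `A`: returning to the root from one of them
would cross its dominating edge. From then on agents only leave by settling vertices, so
`curr_end ≥ pathMax x - wV (vertices off those paths)`.

Upper bound. Make round trips from the root to all vertices in order of decreasing `pathMax`. The
trip to `v` crosses no edge heavier than `pathMax v`, so the surplus `curr - wV (unvisited)` only
ever rises to `pathMax v - wV (vertices unvisited after that trip)`, the lower bound for the prefix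
of the order ending at `v`. Hence this walk is agent-minimal, and in it all visits to vertices with
`pathMax = w` happen after the trips to vertices with `pathMax > w` and by the end of the trips to
those with `pathMax ≥ w`.
-/

lemma Finset.sum_sdiff_le_sum_sdiff_add_sum_sdiff {ι M : Type*} [DecidableEq ι] [AddCommMonoid M]
    [PartialOrder M] [CanonicallyOrderedAdd M] (w : ι → M) (A B F : Finset ι) :
    ∑ x ∈ F \ A, w x ≤ ∑ x ∈ B \ A, w x + ∑ x ∈ F \ B, w x := by
  rw [← Finset.sum_union (Finset.disjoint_sdiff.mono_left Finset.sdiff_subset)]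
  exact Finset.sum_le_sum_of_subset fun x hx => by
    by_cases hxB : x ∈ B <;> simp_all

lemma List.Pairwise.filter_append_filter_not {α : Type*} {R : α → α → Prop} {P : α → Bool}
    {l : List α} (hl : l.Pairwise R) (hP : ∀ a b, R a b → P b → P a) :
    l.filter P ++ l.filter (fun x => !P x) = l := by
  induction l with
  | nil => rfl
  | cons a l ih =>
    obtain ⟨ha, hl⟩ := List.pairwise_cons.1 hl
    by_cases hPa : P a
    · simp [hPa, ih hl]
    · have hfalse : ∀ b ∈ l, P b = false := fun b hb => by
        by_contra h; exact hPa (hP a b (ha b hb) (by simpa using h))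
      have hnil : l.filter P = [] := List.filter_eq_nil_iff.2 fun b hb => by simp [hfalse b hb]
      have hall : l.filter (fun x => !P x) = l :=
        List.filter_eq_self.2 fun b hb => by simp [hfalse b hb]
      simp [hPa, hnil, hall]

lemma Fintype.exists_list_sorted_ge {α β : Type*} [Fintype α] [LinearOrder β] (f : α → β) :
    ∃ L : List α, L.Pairwise (fun a b => f b ≤ f a) ∧ ∀ a, a ∈ L := by
  refine ⟨Finset.univ.toList.mergeSort fun a b => f b ≤ f a, ?_, fun a => by simp⟩
  simpa using List.pairwise_mergeSort (le := fun a b => f b ≤ f a)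
    (fun _ _ _ h₁ h₂ => by simp only [decide_eq_true_eq] at *; exact h₂.trans h₁)
    (fun a b => by simpa using le_total (f b) (f a)) _

namespace SimpleGraph.Walk

variable {V : Type*} {G : SimpleGraph V} {u v w : V}

lemma getElem?_support_length (p : G.Walk u v) : p.support[p.length]? = some v := by
  rw [List.getElem?_eq_getElem (by simp), Walk.support_getElem_length]

lemma getElem?_support_append_of_le {p : G.Walk u v} (q : G.Walk v w) {n : ℕ}
    (hn : n ≤ p.length) : (p.append q).support[n]? = p.support[n]? := by
  rw [Walk.support_append, List.getElem?_append_left (by rw [Walk.length_support]; omega)]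

lemma getElem?_support_append_length_add (p : G.Walk u v) (q : G.Walk v w) (n : ℕ) :
    (p.append q).support[p.length + n]? = q.support[n]? := by
  cases n with
  | zero =>
    rw [add_zero, getElem?_support_append_of_le q le_rfl, getElem?_support_length,
      ← Walk.cons_tail_support]
    rfl
  | succ m =>
    rw [Walk.support_append, List.getElem?_append_right (by rw [Walk.length_support]; omega),
      List.getElem?_tail, Walk.length_support]
    congr 1
    omega

lemma exists_eq_append_cons_of_last_mem_edges {x y : V} (q : G.Walk x y) (E : Set (Sym2 V))
    (h : ∃ e ∈ q.edges, e ∈ E) :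
    ∃ (a b : V) (hab : G.Adj a b) (q₁ : G.Walk x a) (q₂ : G.Walk b y),
      q = q₁.append (cons hab q₂) ∧ s(a, b) ∈ E ∧ ∀ e ∈ q₂.edges, e ∉ E := by
  induction q with
  | nil => simp at h
  | @cons u c _ hadj p ih =>
    by_cases hp : ∃ e ∈ p.edges, e ∈ E
    · obtain ⟨a, b, hab, q₁, q₂, rfl, hE, hq₂⟩ := ih hp
      exact ⟨a, b, hab, cons hadj q₁, q₂, rfl, hE, hq₂⟩
    · obtain ⟨e, he, heE⟩ := h
      rw [edges_cons, List.mem_cons] at he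
      obtain rfl | he := he
      · exact ⟨u, c, hadj, nil, p, rfl, heE, fun e he heE => hp ⟨e, he, heE⟩⟩
      · exact absurd ⟨e, he, heE⟩ hp

end SimpleGraph.Walk

namespace Deploy

open SimpleGraph Finset
open scoped NNReal

section Scan

/-- `curr + settled - add` takes the same value in `s` and `t` (stated without subtraction). -/
def Balanced {V α : Type*} [AddCommMonoid α] (wV : V → α) (s t : St V α) : Prop :=
  t.curr + ∑ v ∈ t.visited, wV v + s.add = s.curr + ∑ v ∈ s.visited, wV v + t.add

lemma Balanced.trans {V α : Type*} [AddCommMonoid α] [IsRightCancelAdd α] {wV : V → α}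
    {s t u : St V α} (h₁ : Balanced wV s t) (h₂ : Balanced wV t u) : Balanced wV s u := by
  unfold Balanced at *
  apply add_right_cancel (b := t.curr + ∑ v ∈ t.visited, wV v + t.add)
  calc _ = (t.curr + ∑ v ∈ t.visited, wV v + s.add)
          + (u.curr + ∑ v ∈ u.visited, wV v + t.add) := by abel
    _ = (s.curr + ∑ v ∈ s.visited, wV v + t.add)
          + (t.curr + ∑ v ∈ t.visited, wV v + u.add) := by rw [h₁, h₂]
    _ = _ := by abel

lemma Balanced.curr_le {V α : Type*} [DecidableEq V] [AddCommMonoid α] [PartialOrder α]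
    [IsOrderedCancelAddMonoid α] {wV : V → α} {s t : St V α} (h : Balanced wV s t)
    (hadd : s.add ≤ t.add) (hvis : s.visited ⊆ t.visited) :
    s.curr ≤ t.curr + ∑ v ∈ t.visited \ s.visited, wV v := by
  have key : s.curr + ∑ v ∈ s.visited, wV v + s.add
      ≤ t.curr + ∑ v ∈ t.visited, wV v + s.add := by
    rw [h]; gcongr
  rw [← sum_sdiff hvis, ← add_assoc] at key
  exact le_of_add_le_add_right (le_of_add_le_add_right key)

variable {V : Type*} {G : SimpleGraph V} {α : Type*} [AddCommMonoid α] [LinearOrder α] [Sub α]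
  (wE : Sym2 V → α) (wV : V → α)

@[simp]
lemma visited_crossEdge (e : Sym2 V) (s : St V α) : (crossEdge wE e s).visited = s.visited := by
  unfold crossEdge; split_ifs <;> rfl

lemma curr_crossEdge (e : Sym2 V) (s : St V α) : (crossEdge wE e s).curr = max (wE e) s.curr := by
  unfold crossEdge; split_ifs with h
  · exact (max_eq_left h.le).symm
  · exact (max_eq_right (not_lt.1 h)).symm

lemma add_le_add_crossEdge [CanonicallyOrderedAdd α] (e : Sym2 V) (s : St V α) :
    s.add ≤ (crossEdge wE e s).add := by
  unfold crossEdge; split_ifs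
  · exact le_self_add
  · exact le_rfl

lemma balanced_crossEdge [CanonicallyOrderedAdd α] [OrderedSub α] (e : Sym2 V) (s : St V α) :
    Balanced wV s (crossEdge wE e s) := by
  unfold Balanced crossEdge; split_ifs with h
  · dsimp only
    set d := wE e - s.curr
    rw [show wE e = s.curr + d from (add_tsub_cancel_of_le h.le).symm]
    abel
  · rfl

variable [DecidableEq V]

@[simp]
lemma visited_visitVtx (v : V) (s : St V α) : (visitVtx wV v s).visited = insert v s.visited := by
  unfold visitVtx; split_ifs with h
  · exact (insert_eq_of_mem h).symm
  all_goals rfl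

lemma add_le_add_visitVtx [CanonicallyOrderedAdd α] (v : V) (s : St V α) :
    s.add ≤ (visitVtx wV v s).add := by
  unfold visitVtx; split_ifs
  · exact le_rfl
  · exact le_self_add
  · exact le_rfl

lemma curr_visitVtx_le [CanonicallyOrderedAdd α] [OrderedSub α] (v : V) (s : St V α) :
    (visitVtx wV v s).curr ≤ s.curr - ∑ x ∈ (visitVtx wV v s).visited \ s.visited, wV x := by
  unfold visitVtx; split_ifs with hv
  · simp
  · exact zero_le
  · simp [insert_sdiff_of_notMem _ hv]

lemma balanced_visitVtx [CanonicallyOrderedAdd α] [OrderedSub α] (v : V) (s : St V α) :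
    Balanced wV s (visitVtx wV v s) := by
  unfold Balanced visitVtx; split_ifs with hv hlt
  · rfl
  · dsimp only
    set d := wV v - s.curr
    rw [sum_insert hv, show wV v = s.curr + d from (add_tsub_cancel_of_le hlt.le).symm]
    abel
  · dsimp only
    rw [sum_insert hv, ← add_assoc, tsub_add_cancel_of_le (not_lt.1 hlt)]

lemma scanWalk_append {u v w : V} (p : G.Walk u v) (q : G.Walk v w) (s : St V α) :
    scanWalk wE wV (p.append q) s = scanWalk wE wV q (scanWalk wE wV p s) := by
  induction p generalizing s with
  | nil => rfl
  | cons _ p ih => exact ih q _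

lemma visited_scanWalk {u v : V} (p : G.Walk u v) (s : St V α) :
    (scanWalk wE wV p s).visited = s.visited ∪ p.support.tail.toFinset := by
  induction p generalizing s with
  | nil => simp [scanWalk]
  | cons _ p ih =>
    rw [scanWalk, ih, visited_visitVtx, visited_crossEdge, Walk.support_cons, List.tail_cons,
      ← Walk.cons_tail_support p]
    ext x
    simp only [mem_union, mem_insert, List.toFinset_cons]
    tauto

lemma visited_subset_scanWalk {u v : V} (p : G.Walk u v) (s : St V α) :
    s.visited ⊆ (scanWalk wE wV p s).visited := by
  rw [visited_scanWalk]; exact subset_union_left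

lemma add_le_add_scanWalk [CanonicallyOrderedAdd α] {u v : V} (p : G.Walk u v) (s : St V α) :
    s.add ≤ (scanWalk wE wV p s).add := by
  induction p generalizing s with
  | nil => exact le_rfl
  | cons _ p ih =>
    exact (add_le_add_crossEdge wE _ s).trans ((add_le_add_visitVtx wV _ _).trans (ih _))

lemma balanced_scanWalk [CanonicallyOrderedAdd α] [OrderedSub α] [IsRightCancelAdd α]
    {u v : V} (p : G.Walk u v) (s : St V α) : Balanced wV s (scanWalk wE wV p s) := by
  induction p generalizing s with
  | nil => rfl
  | cons _ p ih =>
    exact ((balanced_crossEdge wE wV _ s).trans (balanced_visitVtx wV _ _)).trans (ih _)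

def surplus (F : Finset V) (s : St V α) : α := s.curr - ∑ v ∈ F \ s.visited, wV v

lemma surplus_eq_curr [OrderedSub α] {F : Finset V} {s : St V α} (h : F ⊆ s.visited) :
    surplus wV F s = s.curr := by
  simp [surplus, sdiff_eq_empty_iff_subset.2 h]

lemma surplus_crossEdge [IsOrderedAddMonoid α] [OrderedSub α] (F : Finset V) (e : Sym2 V)
    (s : St V α) :
    surplus wV F (crossEdge wE e s)
      = max (wE e - ∑ v ∈ F \ s.visited, wV v) (surplus wV F s) := by
  rw [surplus, curr_crossEdge, visited_crossEdge]
  exact Monotone.map_max fun _ _ h => tsub_le_tsub_right h _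

lemma surplus_visitVtx_le [CanonicallyOrderedAdd α] [OrderedSub α] (F : Finset V) (v : V)
    (s : St V α) : surplus wV F (visitVtx wV v s) ≤ surplus wV F s := by
  unfold surplus
  calc (visitVtx wV v s).curr - ∑ x ∈ F \ (visitVtx wV v s).visited, wV x
      ≤ s.curr - ∑ x ∈ (visitVtx wV v s).visited \ s.visited, wV x
          - ∑ x ∈ F \ (visitVtx wV v s).visited, wV x :=
        tsub_le_tsub_right (curr_visitVtx_le wV v s) _
    _ ≤ s.curr - ∑ x ∈ F \ s.visited, wV x := by
      rw [tsub_tsub]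
      exact tsub_le_tsub_left (Finset.sum_sdiff_le_sum_sdiff_add_sum_sdiff wV _ _ F) _

lemma surplus_scanWalk_le [IsOrderedAddMonoid α] [CanonicallyOrderedAdd α] [OrderedSub α]
    (F : Finset V) {W : α} {u v : V} (p : G.Walk u v) (hW : ∀ e ∈ p.edges, wE e ≤ W)
    (s : St V α) :
    surplus wV F (scanWalk wE wV p s)
      ≤ max (W - ∑ x ∈ F \ (scanWalk wE wV p s).visited, wV x) (surplus wV F s) := by
  induction p generalizing s with
  | nil => exact le_max_right _ _
  | cons hadj p ih =>
    rename_i a b _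
    set t := scanWalk wE wV p (visitVtx wV b (crossEdge wE s(a, b) s))
    have hvis : s.visited ⊆ t.visited :=
      (by simp : s.visited ⊆ (visitVtx wV b (crossEdge wE s(a, b) s)).visited).trans
        (visited_subset_scanWalk wE wV p _)
    have hstep : surplus wV F (visitVtx wV b (crossEdge wE s(a, b) s))
        ≤ max (W - ∑ x ∈ F \ t.visited, wV x) (surplus wV F s) := by
      refine (surplus_visitVtx_le wV F b _).trans ?_
      rw [surplus_crossEdge]
      refine max_le_max (tsub_le_tsub (hW _ (by simp)) (sum_le_sum_of_subset ?_)) le_rfl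
      exact sdiff_subset_sdiff subset_rfl hvis
    calc surplus wV F t ≤ max (W - ∑ x ∈ F \ t.visited, wV x)
          (surplus wV F (visitVtx wV b (crossEdge wE s(a, b) s))) :=
          ih (fun e he => hW e (by simp [he])) _
      _ ≤ _ := max_le (le_max_left _ _) hstep

variable [Fintype V]

def initSt (vs : V) : St V α := visitVtx wV vs ⟨∅, ∑ v, wV v, 0⟩

lemma visited_scanWalk_initSt {vs t : V} (p : G.Walk vs t) :
    (scanWalk wE wV p (initSt wV vs)).visited = p.support.toFinset := by
  rw [visited_scanWalk, initSt, visited_visitVtx]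
  ext; simp [Walk.mem_support_iff]

lemma visited_scanWalk_initSt_eq_univ {vs t : V} (p : G.Walk vs t) (hp : IsCovering p) :
    (scanWalk wE wV p (initSt wV vs)).visited = univ := by
  rw [visited_scanWalk_initSt]
  exact eq_univ_of_forall fun v => List.mem_toFinset.2 (hp v)

lemma agentCount_eq_add_curr [CanonicallyOrderedAdd α] [OrderedSub α] [IsRightCancelAdd α]
    {vs t : V} (p : G.Walk vs t) (hp : IsCovering p) :
    agentCount wE wV p = ∑ v, wV v + (scanWalk wE wV p (initSt wV vs)).curr := by
  have h := (balanced_visitVtx wV vs ⟨∅, ∑ v, wV v, 0⟩).trans (balanced_scanWalk wE wV p _)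
  unfold Balanced at h
  rw [← initSt, visited_scanWalk_initSt_eq_univ wE wV p hp, add_zero, sum_empty, add_zero,
    add_comm (∑ v, wV v)] at h
  rw [agentCount, ← initSt, add_right_cancel h]

lemma surplus_univ_initSt [IsOrderedAddMonoid α] [CanonicallyOrderedAdd α] [OrderedSub α]
    (vs : V) :
    surplus wV univ (initSt wV vs) = 0 := by
  have hsum : ∑ v, wV v = wV vs + ∑ v ∈ univ \ {vs}, wV v := by
    rw [sdiff_singleton_eq_erase, add_sum_erase _ _ (mem_univ vs)]
  unfold surplus initSt visitVtx
  rw [if_neg (notMem_empty vs), if_neg (not_lt.2 (hsum ▸ le_self_add))]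
  exact tsub_eq_zero_of_le (tsub_le_iff_left.2 hsum.le)

end Scan

section Tree

variable {V : Type*} {T : SimpleGraph V} (hT : T.IsTree)

lemma treePath_isPath (u v : V) : (treePath hT u v).IsPath :=
  (hT.existsUnique_path u v).choose_spec.1

lemma eq_treePath {u v : V} {p : T.Walk u v} (hp : p.IsPath) : p = treePath hT u v :=
  (hT.existsUnique_path u v).choose_spec.2 p hp

lemma treePath_self (v : V) : treePath hT v v = Walk.nil :=
  (eq_treePath hT Walk.IsPath.nil).symm

variable {hT} {wE : Sym2 V → ℝ≥0} {vs : V}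

lemma argmax_edges_treePath {v : V} (hv : v ≠ vs) :
    (treePath hT vs v).edges.argmax wE = some (domEdge hT wE vs v) := by
  cases h : (treePath hT vs v).edges.argmax wE with
  | none => exact absurd (Walk.edges_eq_nil.1 (List.argmax_eq_none.1 h)).eq.symm hv
  | some m => simp [domEdge, h]

lemma domEdge_mem_edges {v : V} (hv : v ≠ vs) :
    domEdge hT wE vs v ∈ (treePath hT vs v).edges :=
  List.argmax_mem (argmax_edges_treePath hv)

variable (hT) [DecidableEq V]

lemma edges_treePath_subset {u v : V} (w : T.Walk u v) : (treePath hT u v).edges ⊆ w.edges := by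
  rw [← eq_treePath hT w.bypass_isPath]
  exact w.edges_bypass_subset_edges

lemma support_treePath_subset {u v : V} (w : T.Walk u v) :
    (treePath hT u v).support ⊆ w.support := by
  rw [← eq_treePath hT w.bypass_isPath]
  exact w.support_bypass_subset_support

variable (wE vs)

noncomputable def pathMax (v : V) : ℝ≥0 := (treePath hT vs v).edges.toFinset.sup wE

variable {hT wE vs}

lemma le_pathMax {v : V} {e : Sym2 V} (he : e ∈ (treePath hT vs v).edges) :
    wE e ≤ pathMax hT wE vs v :=
  le_sup (List.mem_toFinset.2 he)

lemma pathMax_le_iff {v : V} {W : ℝ≥0} :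
    pathMax hT wE vs v ≤ W ↔ ∀ e ∈ (treePath hT vs v).edges, wE e ≤ W := by
  simp [pathMax]

lemma pathMax_root : pathMax hT wE vs vs = 0 := by
  simp [pathMax, treePath_self]

lemma pathMax_le_pathMax {v w : V} (hv : v ∈ (treePath hT vs w).support) :
    pathMax hT wE vs v ≤ pathMax hT wE vs w := by
  rw [pathMax_le_iff, ← eq_treePath hT ((treePath_isPath hT vs w).takeUntil hv)]
  exact fun e he => le_pathMax (Walk.edges_takeUntil_subset_edges _ hv he)

lemma wE_domEdge {v : V} (hv : v ≠ vs) : wE (domEdge hT wE vs v) = pathMax hT wE vs v :=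
  le_antisymm (le_pathMax (domEdge_mem_edges hv)) <| pathMax_le_iff.2 fun _ he =>
    List.le_of_mem_argmax he (argmax_edges_treePath hv)

lemma domEdge_mem_edges_of_mem_tailVerts {b v : V} (hb : b ≠ vs)
    (hv : v ∈ tailVerts hT wE vs b) : domEdge hT wE vs b ∈ (treePath hT vs v).edges := by
  obtain ⟨j, hj, rfl⟩ := List.mem_drop_iff_getElem.1 hv
  set p := treePath hT vs b
  set n := domIdx hT wE vs b + 1 + j
  have hn : n ≤ p.length := by rw [Walk.length_support] at hj; omega
  have hpath : ((p.take n).copy rfl (p.getVert_eq_support_getElem hn)).IsPath := by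
    rw [Walk.isPath_copy]; exact (treePath_isPath hT vs b).take n
  rw [← eq_treePath hT hpath, Walk.edges_copy, Walk.edges_take, List.mem_take_iff_getElem]
  have hidx : domIdx hT wE vs b < p.edges.length :=
    List.idxOf_lt_length_iff.2 (domEdge_mem_edges hb)
  exact ⟨_, lt_min (by omega) hidx, List.getElem_idxOf hidx⟩

lemma pathMax_eq_of_mem_csVerts {e : Sym2 V} {v : V} (hv : v ∈ csVerts hT wE vs e) :
    pathMax hT wE vs v = wE e := by
  obtain ⟨b, hb, rfl, hvb⟩ := hv
  exact le_antisymm ((pathMax_le_pathMax (List.drop_subset _ _ hvb)).trans (wE_domEdge hb.2).ge)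
    (le_pathMax (domEdge_mem_edges_of_mem_tailVerts hb.2 hvb))

lemma ne_root_of_mem_csVerts {e : Sym2 V} {v : V} (hv : v ∈ csVerts hT wE vs e) : v ≠ vs := by
  obtain ⟨b, hb, rfl, hvb⟩ := hv
  rintro rfl
  simpa [treePath_self] using domEdge_mem_edges_of_mem_tailVerts hb.2 hvb

end Tree

section RoundTrips

variable {V : Type*} {T : SimpleGraph V} (hT : T.IsTree) (vs : V)

noncomputable def roundTrip (v : V) : T.Walk vs vs :=
  (treePath hT vs v).append (treePath hT vs v).reverse

noncomputable def roundTrips : List V → T.Walk vs vs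
  | [] => Walk.nil
  | v :: l => (roundTrip hT vs v).append (roundTrips l)

lemma roundTrips_append (l₁ l₂ : List V) :
    roundTrips hT vs (l₁ ++ l₂) = (roundTrips hT vs l₁).append (roundTrips hT vs l₂) := by
  induction l₁ with
  | nil => exact (Walk.nil_append _).symm
  | cons v l ih => rw [List.cons_append, roundTrips, roundTrips, ih, Walk.append_assoc]

variable {hT vs}

lemma length_roundTrips_le_of_sublist {l₁ l₂ : List V} (h : l₁.Sublist l₂) :
    (roundTrips hT vs l₁).length ≤ (roundTrips hT vs l₂).length := by
  induction h with
  | slnil => exact le_rfl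
  | cons _ _ ih => rw [roundTrips, Walk.length_append]; omega
  | cons_cons _ _ ih =>
    rw [roundTrips, roundTrips, Walk.length_append, Walk.length_append]; omega

lemma mem_support_roundTrips {l : List V} {u : V} :
    u ∈ (roundTrips hT vs l).support
      ↔ u = vs ∨ ∃ x ∈ l, u ∈ (treePath hT vs x).support := by
  induction l with
  | nil => simp [roundTrips]
  | cons v l ih =>
    simp only [roundTrips, roundTrip, Walk.mem_support_append_iff, Walk.support_reverse,
      List.mem_reverse, or_self, ih, List.mem_cons, exists_eq_or_imp]
    tauto

lemma isCovering_roundTrips {l : List V} (hl : ∀ v, v ∈ l) : IsCovering (roundTrips hT vs l) :=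
  fun v => mem_support_roundTrips.2 (Or.inr ⟨v, hl v, Walk.end_mem_support _⟩)

lemma getElem?_support_roundTrips_append_cons (A B : List V) (v : V) :
    (roundTrips hT vs (A ++ v :: B)).support[(roundTrips hT vs A).length
      + (treePath hT vs v).length]? = some v := by
  rw [roundTrips_append, Walk.getElem?_support_append_length_add, roundTrips, roundTrip,
    ← Walk.append_assoc, Walk.getElem?_support_append_of_le _ le_rfl,
    Walk.getElem?_support_length]

lemma length_roundTrips_append_singleton (A : List V) (v : V) :
    (roundTrips hT vs (A ++ [v])).length
      = (roundTrips hT vs A).length + 2 * (treePath hT vs v).length := by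
  simp [roundTrips_append, roundTrips, roundTrip, two_mul]

variable [DecidableEq V] {wE : Sym2 V → ℝ≥0}

lemma le_pathMax_of_mem_edges_roundTrip {v : V} {e : Sym2 V}
    (he : e ∈ (roundTrip hT vs v).edges) :
    wE e ≤ pathMax hT wE vs v := by
  rw [roundTrip, Walk.edges_append, Walk.edges_reverse, List.mem_append, List.mem_reverse,
    or_self] at he
  exact le_pathMax he

end RoundTrips

section Windows

variable {V : Type*} [DecidableEq V] {T : SimpleGraph V} (hT : T.IsTree) (wE : Sym2 V → ℝ≥0)
  (vs : V)

/-- When `L` is sorted by decreasing `pathMax`, the round trips to the vertices with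
`pathMax ≥ w` form a prefix of `roundTrips hT vs L`, which ends at position `windowEnd`. -/
noncomputable def windowEnd (L : List V) (w : ℝ≥0) : ℕ :=
  (roundTrips hT vs (L.filter fun x => w ≤ pathMax hT wE vs x)).length

noncomputable def windowStart (L : List V) (w : ℝ≥0) : ℕ :=
  (roundTrips hT vs (L.filter fun x => w < pathMax hT wE vs x)).length

variable {hT wE vs} {L : List V}

lemma windowEnd_le_windowStart {w₁ w₂ : ℝ≥0} (h : w₂ < w₁) :
    windowEnd hT wE vs L w₁ ≤ windowStart hT wE vs L w₂ :=
  length_roundTrips_le_of_sublist <| List.monotone_filter_right _ fun x hx => by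
    simp only [decide_eq_true_eq] at hx ⊢
    exact h.trans_le hx

lemma exists_mem_window (hL : L.Pairwise fun a b => pathMax hT wE vs b ≤ pathMax hT wE vs a)
    {v : V} (hv : v ∈ L) :
    ∃ i, windowStart hT wE vs L (pathMax hT wE vs v) ≤ i ∧
      i ≤ windowEnd hT wE vs L (pathMax hT wE vs v) ∧
      (roundTrips hT vs L).support[i]? = some v := by
  obtain ⟨A, B, rfl⟩ := List.append_of_mem hv
  obtain ⟨-, hvB, hAvB⟩ := List.pairwise_append.1 hL
  have hA : ∀ x ∈ A, pathMax hT wE vs v ≤ pathMax hT wE vs x :=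
    fun x hx => hAvB x hx v List.mem_cons_self
  have hB : ∀ x ∈ B, pathMax hT wE vs x ≤ pathMax hT wE vs v :=
    (List.pairwise_cons.1 hvB).1
  refine ⟨_, ?_, ?_, getElem?_support_roundTrips_append_cons A B v⟩
  · refine (length_roundTrips_le_of_sublist ?_).trans (Nat.le_add_right _ _)
    rw [List.filter_append, List.filter_cons_of_neg (by simp),
      (List.filter_eq_nil_iff (l := B)).2 (by simpa using hB), List.append_nil]
    exact List.filter_sublist
  · refine le_trans ?_ (length_roundTrips_le_of_sublist (l₁ := A ++ [v]) ?_)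
    · rw [length_roundTrips_append_singleton]; omega
    · rw [List.filter_append, List.filter_cons_of_pos (by simp),
        (List.filter_eq_self (l := A)).2 (by simpa using hA)]
      exact (List.singleton_sublist.2 List.mem_cons_self).append_left A

lemma le_windowEnd (hL : L.Pairwise fun a b => pathMax hT wE vs b ≤ pathMax hT wE vs a)
    {i : ℕ} {v : V} (hi : (roundTrips hT vs L).support[i]? = some v) (hv : v ≠ vs) :
    i ≤ windowEnd hT wE vs L (pathMax hT wE vs v) := by
  by_contra! hlt
  rw [windowEnd] at hlt
  rw [← hL.filter_append_filter_not (P := fun x => pathMax hT wE vs v ≤ pathMax hT wE vs x)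
    (fun a b hab hb => by simp only [decide_eq_true_eq] at hb ⊢; exact hb.trans hab),
    roundTrips_append, ← Nat.add_sub_cancel' hlt.le,
    Walk.getElem?_support_append_length_add] at hi
  obtain hvs | ⟨x, hx, hvx⟩ := mem_support_roundTrips.1 (List.mem_of_getElem? hi)
  · exact hv hvs
  · simp only [List.mem_filter, Bool.not_eq_true', decide_eq_false_iff_not, not_le] at hx
    exact absurd hx.2 (not_lt.2 (pathMax_le_pathMax hvx))

end Windows

section Minimality

variable {V : Type*} [DecidableEq V] {T : SimpleGraph V} {hT : T.IsTree} {wE : Sym2 V → ℝ≥0}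
  {vs : V}

lemma support_roundTrips_subset_support {a b : V} {hab : T.Adj a b} {q₁ : T.Walk vs a}
    {q₂ : T.Walk b vs} (hq : IsCovering (q₁.append (Walk.cons hab q₂))) {A : List V}
    (hA : ∀ y ∈ A, y ≠ vs) (hq₂ : ∀ y ∈ A, domEdge hT wE vs y ∉ q₂.edges) :
    (roundTrips hT vs A).support ⊆ q₁.support := by
  intro u hu
  obtain rfl | ⟨y, hy, huy⟩ := mem_support_roundTrips.1 hu
  · exact q₁.start_mem_support
  have hy₁ : y ∈ q₁.support := by
    by_contra hy₁
    have hy₂ : y ∈ q₂.support := by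
      have := hq y
      simp only [Walk.mem_support_append_iff, Walk.support_cons, List.mem_cons] at this
      obtain h | rfl | h := this
      · exact absurd h hy₁
      · exact absurd q₁.end_mem_support hy₁
      · exact h
    -- returning from `y` to the root crosses the dominating edge of `y` once more
    have hdom := edges_treePath_subset hT (q₂.dropUntil y hy₂).reverse
      (domEdge_mem_edges (wE := wE) (hA y hy))
    rw [Walk.edges_reverse, List.mem_reverse] at hdom
    exact hq₂ y hy (Walk.edges_dropUntil_subset_edges _ _ hdom)
  exact Walk.support_takeUntil_subset_support q₁ hy₁
    (support_treePath_subset hT (q₁.takeUntil y hy₁) huy)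

variable (wV : V → ℝ≥0)

lemma surplus_scanWalk_roundTrips_le (F : Finset V) {B : ℝ≥0} (l : List V) (s : St V ℝ≥0)
    (h₀ : surplus wV F s ≤ B)
    (h : ∀ A x, (A ++ [x]).IsPrefix l → pathMax hT wE vs x
      - ∑ v ∈ F \ (scanWalk wE wV (roundTrips hT vs (A ++ [x])) s).visited, wV v ≤ B) :
    surplus wV F (scanWalk wE wV (roundTrips hT vs l) s) ≤ B := by
  induction l generalizing s with
  | nil => exact h₀
  | cons v l ih =>
    rw [roundTrips, scanWalk_append]
    refine ih _ ?_ fun A x hAx => ?_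
    · refine (surplus_scanWalk_le wE wV F _ (fun _ he => le_pathMax_of_mem_edges_roundTrip he)
        s).trans (max_le ?_ h₀)
      simpa [roundTrips, scanWalk_append] using h [] v (by simp)
    · simpa [roundTrips, scanWalk_append] using h (v :: A) x (by simpa using hAx)

variable [Fintype V]

lemma pathMax_sub_le_curr_scanWalk {q : T.Walk vs vs} (hq : IsCovering q) {A : List V} {x : V}
    (hx : x ∈ A) (hA : ∀ y ∈ A, pathMax hT wE vs x ≤ pathMax hT wE vs y) :
    pathMax hT wE vs x - ∑ v ∈ univ \ (roundTrips hT vs A).support.toFinset, wV v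
      ≤ (scanWalk wE wV q (initSt wV vs)).curr := by
  rcases eq_or_ne (pathMax hT wE vs x) 0 with h0 | h0
  · simp [h0]
  have hAvs : ∀ y ∈ A, y ≠ vs := by
    rintro y hy rfl
    exact h0 (le_zero_iff.1 ((hA _ hy).trans pathMax_root.le))
  have hdom : domEdge hT wE vs x ∈ q.edges :=
    Walk.edges_takeUntil_subset_edges q (hq x)
      (edges_treePath_subset hT _ (domEdge_mem_edges (hAvs x hx)))
  obtain ⟨a, b, hab, q₁, q₂, rfl, ⟨y, hy, hye⟩, hq₂⟩ :=
    q.exists_eq_append_cons_of_last_mem_edges {e | ∃ y ∈ A, domEdge hT wE vs y = e}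
      ⟨_, hdom, x, hx, rfl⟩
  have hS := support_roundTrips_subset_support hq hAvs fun y hy h => hq₂ _ h ⟨y, hy, rfl⟩
  set s := crossEdge wE s(a, b) (scanWalk wE wV q₁ (initSt wV vs))
  set t := scanWalk wE wV q₂ (visitVtx wV b s)
  have hst : Balanced wV s t := (balanced_visitVtx wV b s).trans (balanced_scanWalk wE wV q₂ _)
  have hvis : s.visited ⊆ t.visited :=
    (by simp : s.visited ⊆ (visitVtx wV b s).visited).trans (visited_subset_scanWalk wE wV q₂ _)
  have hS' : (roundTrips hT vs A).support.toFinset ⊆ s.visited := by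
    rw [visited_crossEdge, visited_scanWalk_initSt]
    exact fun u hu => List.mem_toFinset.2 (hS (List.mem_toFinset.1 hu))
  rw [scanWalk_append, tsub_le_iff_right]
  calc pathMax hT wE vs x ≤ wE s(a, b) := by
        rw [← hye, wE_domEdge (wE := wE) (hAvs y hy)]; exact hA y hy
    _ ≤ s.curr := by rw [curr_crossEdge]; exact le_max_left _ _
    _ ≤ t.curr + ∑ v ∈ t.visited \ s.visited, wV v :=
      hst.curr_le ((add_le_add_visitVtx wV b s).trans (add_le_add_scanWalk wE wV q₂ _)) hvis
    _ ≤ t.curr + ∑ v ∈ univ \ (roundTrips hT vs A).support.toFinset, wV v := by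
      gcongr
      exact subset_univ _

lemma agentCount_roundTrips_le {L : List V}
    (hL : L.Pairwise fun a b => pathMax hT wE vs b ≤ pathMax hT wE vs a) (hLcov : ∀ v, v ∈ L)
    {q : T.Walk vs vs} (hq : IsCovering q) :
    agentCount wE wV (roundTrips hT vs L) ≤ agentCount wE wV q := by
  have hP := isCovering_roundTrips (hT := hT) (vs := vs) hLcov
  rw [agentCount_eq_add_curr wE wV _ hP, agentCount_eq_add_curr wE wV _ hq]
  gcongr
  rw [← surplus_eq_curr wV (visited_scanWalk_initSt_eq_univ wE wV _ hP).ge]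
  refine surplus_scanWalk_roundTrips_le wV univ L _ ((surplus_univ_initSt wV vs).trans_le zero_le)
    fun A x hAx => ?_
  rw [visited_scanWalk_initSt]
  obtain ⟨C, rfl⟩ := hAx
  refine pathMax_sub_le_curr_scanWalk wV hq (List.mem_append_right _ (List.mem_singleton_self x))
    fun y hy => ?_
  obtain hyA | hyx := List.mem_append.1 hy
  · exact (List.pairwise_append.1 (List.pairwise_append.1 hL).1).2.2 y hyA x
      (List.mem_singleton_self x)
  · rw [List.mem_singleton.1 hyx]

end Minimality

end Deploy

open Deploy

/-- for a finite weighted tree `T` rooted at the start vertex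
`v_s`, there is an agent-minimal closed covering walk from `v_s` that visits
the collected subtrees of `T` in decreasing order of the weights of their
dominating edges: for each collected subtree there is an interval of the walk
containing (the positions of) all of its vertices and after which none of its
vertices ever appears again (it is fully explored before being left and never
re-entered afterwards), and the interval of a collected subtree with a larger
dominating edge weight comes before the interval of one with a smaller
dominating edge weight. -/
theorem return_variant_visits_in_decreasing_order
    {V : Type*} [Fintype V] [DecidableEq V] (T : SimpleGraph V) (hT : T.IsTree)
    (wE : Sym2 V → NNReal) (wV : V → NNReal) (vs : V) :
    ∃ p : T.Walk vs vs,
      Deploy.IsCovering p ∧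
      (∀ q : T.Walk vs vs, Deploy.IsCovering q →
        Deploy.agentCount wE wV p ≤ Deploy.agentCount wE wV q) ∧
      ∃ f g : Sym2 V → ℕ,
        (∀ e ∈ Deploy.DomEdges hT wE vs,
          (∀ v ∈ Deploy.csVerts hT wE vs e,
            ∃ i, f e ≤ i ∧ i ≤ g e ∧ p.support[i]? = some v) ∧
          (∀ v ∈ Deploy.csVerts hT wE vs e,
            ∀ i, p.support[i]? = some v → i ≤ g e)) ∧
        (∀ e₁ ∈ Deploy.DomEdges hT wE vs, ∀ e₂ ∈ Deploy.DomEdges hT wE vs,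
          wE e₂ < wE e₁ → g e₁ ≤ f e₂) := by
  obtain ⟨L, hL, hLcov⟩ := Fintype.exists_list_sorted_ge (pathMax hT wE vs)
  refine ⟨roundTrips hT vs L, isCovering_roundTrips hLcov,
    fun q hq => agentCount_roundTrips_le wV hL hLcov hq,
    fun e => windowStart hT wE vs L (wE e), fun e => windowEnd hT wE vs L (wE e),
    fun e _ => ⟨fun v hv => ?_, fun v hv i hi => ?_⟩,
    fun _ _ _ _ h => windowEnd_le_windowStart h⟩
  · beta_reduce
    rw [← pathMax_eq_of_mem_csVerts hv]
    exact exists_mem_window hL (hLcov v)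
  · beta_reduce
    rw [← pathMax_eq_of_mem_csVerts hv]
    exact le_windowEnd hL hi (ne_root_of_mem_csVerts hv)
end

section
/- Let G be a finite connected simple graph on at least two vertices with nonnegative real edge weights, and let T be a minimum spanning tree of G with maximum edge weight w*. Then every walk in G that starts at a vertex v_s and visits every vertex of G traverses at least one edge of weight at least w*. -/
/-!
Let `s(a, b)` be a heaviest edge of `T`. Deleting it splits `T` into the component `S` of `a`
and the component of `b`. A walk visiting every vertex visits `a ∈ S` and `b ∉ S`, so it uses an
edge `s(u, v)` of `G` leaving `S`. Exchanging `s(a, b)` for `s(u, v)` in `T` gives another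
spanning tree of `G`, so minimality of `T` forces `w s(a, b) ≤ w s(u, v)`.
-/

open Finset

namespace SimpleGraph

variable {V : Type*} {G T : SimpleGraph V} {a b u v : V}

lemma Reachable.reachable_deleteEdges_or {x : V} (h : G.Reachable a x) :
    (G.deleteEdges {s(a, b)}).Reachable a x ∨ (G.deleteEdges {s(a, b)}).Reachable b x := by
  set F := G.deleteEdges {s(a, b)}
  obtain ⟨p⟩ := h
  by_contra hx
  obtain ⟨d, -, hd, hd'⟩ :=
    p.exists_boundary_dart {y | F.Reachable a y ∨ F.Reachable b y} (Or.inl .rfl) hx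
  by_cases he : d.edge = s(a, b)
  · rcases Sym2.eq_iff.mp he with ⟨-, h⟩ | ⟨-, h⟩ <;> simp [h] at hd'
  · have hF : F.Adj d.fst d.snd := (deleteEdges_adj ..).mpr ⟨d.adj, he⟩
    exact hd' (hd.imp (·.trans hF.reachable) (·.trans hF.reachable))

lemma Walk.exists_boundary_edge {x y : V} (p : G.Walk x y) (S : Set V)
    (hu : u ∈ p.support) (hv : v ∈ p.support) (huS : u ∈ S) (hvS : v ∉ S) :
    ∃ c ∈ S, ∃ d ∉ S, s(c, d) ∈ p.edges := by
  classical
  by_cases hx : x ∈ S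
  · obtain ⟨d, hd, hd₁, hd₂⟩ := (p.takeUntil v hv).exists_boundary_dart S hx hvS
    exact ⟨d.fst, hd₁, d.snd, hd₂, p.edges_takeUntil_subset_edges hv (List.mem_map_of_mem hd)⟩
  · obtain ⟨d, hd, hd₁, hd₂⟩ :=
      (p.takeUntil u hu).exists_boundary_dart Sᶜ hx (not_not.mpr huS)
    refine ⟨d.snd, not_not.mp hd₂, d.fst, hd₁, ?_⟩
    rw [Sym2.eq_swap]
    exact p.edges_takeUntil_subset_edges hu (List.mem_map_of_mem hd)

lemma IsTree.deleteEdges_sup_edge (hT : T.IsTree)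
    (hu : (T.deleteEdges {s(a, b)}).Reachable a u)
    (hv : ¬ (T.deleteEdges {s(a, b)}).Reachable a v) :
    (T.deleteEdges {s(a, b)} ⊔ edge u v).IsTree := by
  set F := T.deleteEdges {s(a, b)}
  have hside (x : V) : F.Reachable a x ∨ F.Reachable b x :=
    (hT.connected.preconnected a x).reachable_deleteEdges_or
  have huv : ¬ F.Reachable u v := fun h ↦ hv (hu.trans h)
  have hab : (F ⊔ edge u v).Reachable a b := by
    have hedge : (edge u v).Adj u v :=
      (edge_adj ..).mpr ⟨.inl ⟨rfl, rfl⟩, by rintro rfl; exact huv .rfl⟩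
    exact ((hu.mono le_sup_left).trans (Adj.reachable (Or.inr hedge))).trans
      (((hside v).resolve_left hv).symm.mono le_sup_left)
  refine ⟨(connected_iff_exists_forall_reachable _).2 ⟨a, fun x ↦ ?_⟩,
    (hT.isAcyclic.anti (deleteEdges_le _)).sup_edge_of_not_reachable huv⟩
  rcases hside x with h | h
  · exact h.mono le_sup_left
  · exact hab.trans (h.mono le_sup_left)

open scoped Classical in
lemma IsTree.weight_le_of_minimal [Fintype V] {M : Type*} [AddCommMonoid M] [PartialOrder M]
    [IsOrderedCancelAddMonoid M] (w : Sym2 V → M) (hTG : T ≤ G) (hT : T.IsTree)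
    (hmin : ∀ T' : SimpleGraph V, T' ≤ G → T'.IsTree →
      ∑ e ∈ T.edgeFinset, w e ≤ ∑ e ∈ T'.edgeFinset, w e)
    (hab : T.Adj a b) (huv : G.Adj u v) (hu : (T.deleteEdges {s(a, b)}).Reachable a u)
    (hv : ¬ (T.deleteEdges {s(a, b)}).Reachable a v) :
    w s(a, b) ≤ w s(u, v) := by
  set F := T.deleteEdges {s(a, b)}
  have hF : ¬ F.Adj u v := fun h ↦ hv (hu.trans h.reachable)
  have hle : F ⊔ edge u v ≤ G :=
    sup_le ((deleteEdges_le _).trans hTG) (G.edge_le_iff.mpr (.inr huv))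
  have hnew : s(u, v) ∉ T.edgeFinset.erase s(a, b) := by simpa [F, and_comm] using hF
  have hsum :
      ∑ e ∈ T.edgeFinset, w e ≤ ∑ e ∈ insert s(u, v) (T.edgeFinset.erase s(a, b)), w e := by
    convert hmin _ hle (hT.deleteEdges_sup_edge hu hv) using 2
    ext; simp [F, edgeSet_edge_of_ne huv.ne, and_comm, or_comm]
  have hab' : s(a, b) ∈ T.edgeFinset := mem_edgeFinset.mpr hab
  rw [sum_insert hnew, ← add_sum_erase _ _ hab'] at hsum
  exact le_of_add_le_add_right hsum

end SimpleGraph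

open SimpleGraph

open scoped Classical in
theorem covering_walk_crosses_heavy_edge_general
    {V : Type*} [Fintype V] (G : SimpleGraph V)
    (hcard : 1 < Fintype.card V)
    (wE : Sym2 V → NNReal)
    (T : SimpleGraph V) (hTG : T ≤ G) (hT : T.IsTree)
    (hmin : ∀ T' : SimpleGraph V, T' ≤ G → T'.IsTree →
      ∑ e ∈ T.edgeFinset, wE e ≤ ∑ e ∈ T'.edgeFinset, wE e)
    (vs t : V) (p : G.Walk vs t) (hp : ∀ v : V, v ∈ p.support) :
    ∃ e ∈ p.edges, T.edgeFinset.sup wE ≤ wE e := by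
  have : Nontrivial V := Fintype.one_lt_card_iff_nontrivial.mp hcard
  obtain ⟨x, hx⟩ := hT.connected.preconnected.exists_adj_of_nontrivial vs
  obtain ⟨e, he, hsup⟩ := exists_mem_eq_sup _ ⟨s(vs, x), mem_edgeFinset.mpr hx⟩ wE
  induction e using Sym2.ind with | _ a b =>
  have hab : T.Adj a b := mem_edgeFinset.mp he
  have hbridge : ¬ (T.deleteEdges {s(a, b)}).Reachable a b :=
    isBridge_iff.mp (isAcyclic_iff_forall_adj_isBridge.mp hT.isAcyclic hab)
  obtain ⟨u, hu, v, hv, huv⟩ :=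
    p.exists_boundary_edge {y | (T.deleteEdges {s(a, b)}).Reachable a y} (hp a) (hp b) .rfl hbridge
  exact ⟨_, huv, hsup ▸ hT.weight_le_of_minimal wE hTG hmin hab
    (p.adj_of_mem_edges huv) hu hv⟩

open scoped Classical in
/-- let `T` be a minimum spanning tree of a finite connected
simple graph `G` on at least two vertices, with maximum edge weight `w*`.
Every walk in `G` that starts at a vertex `v_s` and visits every vertex of
`G` traverses at least one edge of weight at least `w*`. -/
theorem covering_walk_crosses_heavy_edge
    {V : Type*} [Fintype V] [DecidableEq V] (G : SimpleGraph V)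
    (hcard : 1 < Fintype.card V) (hG : G.Connected)
    (wE : Sym2 V → NNReal)
    (T : SimpleGraph V) (hTG : T ≤ G) (hT : T.IsTree)
    (hmin : ∀ T' : SimpleGraph V, T' ≤ G → T'.IsTree →
      ∑ e ∈ T.edgeFinset, wE e ≤ ∑ e ∈ T'.edgeFinset, wE e)
    (vs t : V) (p : G.Walk vs t) (hp : ∀ v : V, v ∈ p.support) :
    ∃ e ∈ p.edges, T.edgeFinset.sup wE ≤ wE e :=
  covering_walk_crosses_heavy_edge_general G hcard wE T hTG hT hmin vs t p hp
end
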